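/- arXiv:1212.4187 — 4 statements merged into one kernel-verified Lean document; each statement's English description precedes it below -/
import Mathlib

section
/- Every rational number q has a unique expression of the form q = Σ_{s=1}^∞ q_{-s}·(-1)^s/((s+1)!) + Σ_{r=1}^∞ q_r·(-1)^{r+1}·r!, where (q_n)_{n∈ℤ\{0}} are nonnegative integers satisfying 0 ≤ q_{-s} ≤ s for every s > 0 and 0 ≤ q_r ≤ r for every r > 0, and q_{-s} = q_r = 0 for all but finitely many r, s. That is, there exists a unique finitely supported function n ↦ q_n from ℤ\{0} to the nonnegative integers with q_n ≤ |n| for all n, such that q equals the stated (finite) sum. -/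
/-!
Position `t ≠ 0` carries a digit in `0, …, |t|` and the weight `c_t = ratCoeff t`; passing from
`t` to the next nonzero position multiplies the weight by `-(|t| + 1)`, so this is a mixed-radix
system with negative radices.

Uniqueness: telescoping gives `∑_{a ≤ t' < t} |t'| |c_t'| = |c_t| - |c_a| < |c_t|`, so at the
largest position where two representations differ the difference cannot be compensated below.

Existence: `x` is an integer multiple `m c_t` of `c_t` for `t = -(den x + 1)`. The digit at `t`
is `m mod (|t| + 1)`, and what remains is an integer multiple of the next weight. After the
finitely many negative positions the remainder is an integer, and on the positive positions its
multiplier shrinks in absolute value (as in base `-2`), so the process stops.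
-/

def ratCoeff (t : ℤ) : ℚ :=
  if t < 0 then (-1 : ℚ) ^ (-t).toNat / ((-t).toNat + 1).factorial
  else (-1 : ℚ) ^ (t.toNat + 1) * (t.toNat).factorial

open Finset

lemma ratCoeff_natCast (r : ℕ) : ratCoeff r = (-1) ^ (r + 1) * r.factorial := by
  simp [ratCoeff]

lemma ratCoeff_neg_natCast_add_one (s : ℕ) :
    ratCoeff (-(s + 1 : ℕ)) = (-1) ^ (s + 1) / (s + 2).factorial := by
  rw [ratCoeff, if_pos (by omega), neg_neg, Int.toNat_natCast]

lemma ratCoeff_ne_zero (t : ℤ) : ratCoeff t ≠ 0 := by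
  unfold ratCoeff; split_ifs <;> positivity

lemma ratCoeff_add_one {t : ℤ} (ht : t ≠ -1) :
    ratCoeff (t + 1) = -(t.natAbs + 1) * ratCoeff t := by
  rcases le_or_gt 0 t with h0 | h0
  · lift t to ℕ using h0
    rw [← Nat.cast_one, ← Nat.cast_add, ratCoeff_natCast, ratCoeff_natCast, Nat.factorial_succ]
    push_cast [Int.natAbs_natCast]; ring
  · obtain ⟨s, rfl⟩ : ∃ s : ℕ, t = -(s + 2 : ℕ) := ⟨(-t).toNat - 2, by omega⟩
    have : -((s + 2 : ℕ) : ℤ) + 1 = -(s + 1 : ℕ) := by push_cast; ring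
    rw [this, show s + 2 = (s + 1) + 1 from rfl, ratCoeff_neg_natCast_add_one,
      ratCoeff_neg_natCast_add_one, Int.natAbs_neg, Int.natAbs_natCast,
      Nat.factorial_succ (s + 2)]
    push_cast; field_simp; ring

lemma ratCoeff_one : ratCoeff 1 = -((-1 : ℤ).natAbs + 1) * ratCoeff (-1) := by
  norm_num [ratCoeff]

-- Valid for every `t`, including `t = -1, 0`, thanks to the value `ratCoeff 0 = -1`.
lemma abs_ratCoeff_add_one (t : ℤ) : |ratCoeff (t + 1)| = (t.natAbs + 1) * |ratCoeff t| := by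
  rcases eq_or_ne t (-1) with rfl | ht
  · norm_num [ratCoeff]
  · rw [ratCoeff_add_one ht, abs_mul, abs_neg, abs_of_nonneg (by positivity)]

lemma sum_Ico_natAbs_mul_abs_ratCoeff {a b : ℤ} (hab : a ≤ b) :
    ∑ n ∈ Ico a b, n.natAbs * |ratCoeff n| = |ratCoeff b| - |ratCoeff a| := by
  induction b, hab using Int.leInduction with
  | base => simp
  | succ b hab ih =>
    rw [← insert_Ico_right_eq_Ico_add_one hab, sum_insert (by simp), ih, abs_ratCoeff_add_one]
    ring

lemma eq_zero_of_sum_intCast_mul_eq_zero {ι R : Type*} [LinearOrder ι] [Ring R] [LinearOrder R]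
    [IsStrictOrderedRing R] {s : Finset ι} {d : ι → ℤ} {w : ι → R}
    (hdom : ∀ i ∈ s, ∑ j ∈ s with j < i, |d j * w j| < |w i|)
    (hsum : ∑ i ∈ s, d i * w i = 0) : ∀ i ∈ s, d i = 0 := by
  classical
  by_contra! h
  obtain ⟨i, hi, hdi⟩ := h
  set T := s.filter (d · ≠ 0)
  have hT : T.Nonempty := ⟨i, mem_filter.2 ⟨hi, hdi⟩⟩
  obtain ⟨hk, hdk⟩ := mem_filter.1 (T.max'_mem hT)
  set k := T.max' hT
  have htop : ∑ j ∈ s with ¬j < k, (d j * w j) = d k * w k := by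
    refine sum_eq_single_of_mem k (mem_filter.2 ⟨hk, lt_irrefl k⟩) fun j hj hjk => ?_
    obtain ⟨hj, hkj⟩ := mem_filter.1 hj
    have : d j = 0 := by
      by_contra hdj
      exact hjk (le_antisymm (T.le_max' j (mem_filter.2 ⟨hj, hdj⟩)) (not_lt.1 hkj))
    simp [this]
  have hdk_eq : d k * w k = -∑ j ∈ s with j < k, d j * w j := by
    rw [← sum_filter_add_sum_filter_not s (· < k), htop] at hsum
    exact eq_neg_of_add_eq_zero_right hsum
  have hone : (1 : R) ≤ |(d k : R)| := by exact_mod_cast Int.one_le_abs hdk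
  refine lt_irrefl |w k| ?_
  calc |w k| ≤ |(d k : R)| * |w k| := le_mul_of_one_le_left (abs_nonneg _) hone
    _ = |∑ j ∈ s with j < k, d j * w j| := by rw [← abs_mul, hdk_eq, abs_neg]
    _ ≤ ∑ j ∈ s with j < k, |d j * w j| := abs_sum_le_sum_abs _ _
    _ < |w k| := hdom k hk

def ratValue (f : ℤ →₀ ℕ) : ℚ := f.sum fun n k => k * ratCoeff n

lemma eq_of_ratValue_eq {f g : ℤ →₀ ℕ} (hf : ∀ n, f n ≤ n.natAbs) (hg : ∀ n, g n ≤ n.natAbs)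
    (h : ratValue f = ratValue g) : f = g := by
  classical
  set s := f.support ∪ g.support
  have hval {u : ℤ →₀ ℕ} (hu : u.support ⊆ s) : ratValue u = ∑ n ∈ s, u n * ratCoeff n :=
    Finsupp.sum_of_support_subset _ hu _ (by simp)
  have hsum : ∑ n ∈ s, ((f n - g n : ℤ) : ℚ) * ratCoeff n = 0 := by
    simp only [Int.cast_sub, Int.cast_natCast, sub_mul, sum_sub_distrib]
    rw [← hval subset_union_left, ← hval subset_union_right, h, sub_self]
  have hdigit (n : ℤ) : |((f n - g n : ℤ) : ℚ)| ≤ n.natAbs := by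
    have hfn : (f n : ℚ) ≤ n.natAbs := by exact_mod_cast hf n
    have hgn : (g n : ℚ) ≤ n.natAbs := by exact_mod_cast hg n
    push_cast
    exact abs_sub_le_iff.2 ⟨by linarith [(g n).cast_nonneg (α := ℚ)],
      by linarith [(f n).cast_nonneg (α := ℚ)]⟩
  have hdom :
      ∀ i ∈ s, ∑ j ∈ s with j < i, |((f j - g j : ℤ) : ℚ) * ratCoeff j| < |ratCoeff i| := by
    intro i hi
    have hs : s.Nonempty := ⟨i, hi⟩
    calc ∑ j ∈ s with j < i, |((f j - g j : ℤ) : ℚ) * ratCoeff j|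
        ≤ ∑ j ∈ s with j < i, j.natAbs * |ratCoeff j| :=
          sum_le_sum fun j _ => by rw [abs_mul]; gcongr; exact hdigit j
      _ ≤ ∑ j ∈ Ico (s.min' hs) i, j.natAbs * |ratCoeff j| := by
          refine sum_le_sum_of_subset_of_nonneg (fun j hj => ?_) fun _ _ _ => by positivity
          obtain ⟨hj, hji⟩ := mem_filter.1 hj
          exact mem_Ico.2 ⟨s.min'_le j hj, hji⟩
      _ = |ratCoeff i| - |ratCoeff (s.min' hs)| := sum_Ico_natAbs_mul_abs_ratCoeff (s.min'_le i hi)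
      _ < |ratCoeff i| := sub_lt_self _ (abs_pos.2 (ratCoeff_ne_zero _))
  have hzero := eq_zero_of_sum_intCast_mul_eq_zero hdom hsum
  ext n
  by_cases hn : n ∈ s
  · have := hzero n hn; omega
  · simp only [s, mem_union, Finsupp.mem_support_iff, not_or, not_not] at hn
    rw [hn.1, hn.2]

def RepresentableFrom (t : ℤ) (x : ℚ) : Prop :=
  ∃ f : ℤ →₀ ℕ, (∀ n, f n ≤ n.natAbs) ∧ (∀ n ∈ f.support, t ≤ n) ∧ x = ratValue f

lemma representableFrom_zero (t : ℤ) : RepresentableFrom t 0 :=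
  ⟨0, by simp, by simp, by simp [ratValue]⟩

lemma RepresentableFrom.add_digit {t t' : ℤ} (htt' : t < t') {x : ℚ} (hx : RepresentableFrom t' x)
    {d : ℕ} (hd : d ≤ t.natAbs) : RepresentableFrom t (d * ratCoeff t + x) := by
  classical
  obtain ⟨f, hf, hsupp, rfl⟩ := hx
  have hft : f t = 0 := Finsupp.notMem_support_iff.1 fun h => (hsupp t h).not_gt htt'
  refine ⟨Finsupp.single t d + f, fun n => ?_, fun n hn => ?_, ?_⟩
  · rcases eq_or_ne n t with rfl | hn
    · simpa [hft] using hd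
    · simpa [Finsupp.single_eq_of_ne hn] using hf n
  · rcases mem_union.1 (Finsupp.support_add hn) with h | h
    · exact (mem_singleton.1 (Finsupp.support_single_subset h)).ge
    · exact htt'.le.trans (hsupp n h)
  · rw [ratValue, ratValue, Finsupp.sum_add_index' (by simp) (by intros; push_cast; ring),
      Finsupp.sum_single_index (by simp)]

lemma RepresentableFrom.intCast_mul {t t' : ℤ} (htt' : t < t')
    (hc : ratCoeff t' = -(t.natAbs + 1) * ratCoeff t) (m : ℤ)
    (h : RepresentableFrom t' ((-(m / (t.natAbs + 1)) : ℤ) * ratCoeff t')) :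
    RepresentableFrom t (m * ratCoeff t) := by
  set b : ℤ := t.natAbs + 1
  have hb : 0 < b := by omega
  have hr := Int.emod_nonneg m hb.ne'
  have hrb := Int.emod_lt_of_pos m hb
  convert h.add_digit htt' (d := (m % b).toNat) (by omega) using 1
  have hdiv : (m : ℚ) = (m % b : ℤ) + b * (m / b : ℤ) := by
    exact_mod_cast (Int.emod_add_mul_ediv m b).symm
  have hd : (((m % b).toNat : ℕ) : ℚ) = (m % b : ℤ) := by exact_mod_cast Int.toNat_of_nonneg hr
  rw [hc, hd, hdiv]
  push_cast [b, Nat.cast_natAbs]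
  ring

lemma representableFrom_of_pos {t : ℤ} (ht : 0 < t) (m : ℤ) :
    RepresentableFrom t (m * ratCoeff t) := by
  -- The step `m ↦ -(m / (t + 1))` sends `-1` to `1`, so `|m|` need not drop, but `|4m - 1|` does.
  induction hμ : (4 * m - 1).natAbs using Nat.strong_induction_on generalizing t m with
  | _ μ ih =>
  rcases eq_or_ne m 0 with rfl | hm
  · simpa using representableFrom_zero t
  refine .intCast_mul (lt_add_one t) (ratCoeff_add_one (by omega)) m (ih _ ?_ (by omega) _ rfl)
  have hdiv := Int.emod_add_mul_ediv m (t.natAbs + 1)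
  have hr := Int.emod_nonneg m (b := t.natAbs + 1) (by omega)
  have hrb := Int.emod_lt_of_pos m (b := t.natAbs + 1) (by omega)
  have ha : (1 : ℤ) ≤ t.natAbs := by omega
  generalize m / (t.natAbs + 1) = q at *
  generalize m % (t.natAbs + 1) = r at *
  generalize (t.natAbs : ℤ) = a at *
  have hq : (0 < m → 0 ≤ q ∧ 2 * q ≤ m) ∧ (m < 0 → q < 0 ∧ m ≤ q) := by
    constructor <;> intro hm' <;> constructor <;> nlinarith
  omega

lemma representableFrom_of_neg (s : ℕ) (m : ℤ) :
    RepresentableFrom (-(s + 1 : ℕ)) (m * ratCoeff (-(s + 1 : ℕ))) := by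
  induction s generalizing m with
  | zero => exact .intCast_mul (by norm_num) ratCoeff_one m (representableFrom_of_pos one_pos _)
  | succ s ih =>
    have hc := ratCoeff_add_one (t := -(s + 1 + 1 : ℕ)) (by omega)
    rw [show -((s + 1 + 1 : ℕ) : ℤ) + 1 = -(s + 1 : ℕ) by push_cast; ring] at hc
    exact .intCast_mul (by omega) hc m (ih _)

lemma exists_eq_intCast_mul_ratCoeff (x : ℚ) :
    ∃ (s : ℕ) (m : ℤ), x = m * ratCoeff (-(s + 1 : ℕ)) := by
  obtain ⟨k, hk⟩ : x.den ∣ (x.den + 2).factorial := Nat.dvd_factorial x.pos (by omega)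
  refine ⟨x.den, (-1) ^ (x.den + 1) * x.num * k, ?_⟩
  rw [ratCoeff_neg_natCast_add_one, hk]
  nth_rw 1 [← Rat.num_div_den x]
  have hk0 : k ≠ 0 := by
    rintro rfl
    exact Nat.factorial_ne_zero _ (by simpa using hk)
  have hsq : ((-1 : ℚ) ^ (x.den + 1)) ^ 2 = 1 := by
    rw [← pow_mul]; exact Even.neg_one_pow ⟨x.den + 1, by ring⟩
  push_cast
  field_simp
  linear_combination (-(x.num : ℚ)) * hsq

/-- Every rational number `q` has a unique representation
`q = Σ_{s>0} q_{-s}·(-1)^s/((s+1)!) + Σ_{r>0} q_r·(-1)^{r+1}·r!` with finitely supported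
nonnegative integer coefficients satisfying `q_n ≤ |n|` for all nonzero `n`
(the bound forces `q_0 = 0`, so the coefficients are indexed by the nonzero integers). -/
theorem rat_unique_representation (x : ℚ) :
    ∃! f : ℤ →₀ ℕ, (∀ n : ℤ, f n ≤ n.natAbs) ∧
      x = ∑ n ∈ f.support, (f n : ℚ) * ratCoeff n := by
  obtain ⟨s, m, rfl⟩ := exists_eq_intCast_mul_ratCoeff x
  obtain ⟨f, hf, -, hval⟩ := representableFrom_of_neg s m
  exact ⟨f, ⟨hf, hval⟩, fun g hg => eq_of_ratValue_eq hg.1 hf (hg.2.symm.trans hval)⟩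
end

section
/- For every finite set F of positive integers and every choice of natural numbers (q_s)_{s∈F} with 1 ≤ q_s ≤ s for each s ∈ F, the sum Σ_{s∈F} q_s·(-1)^s/((s+1)!) lies strictly between e^{−1} − 1 and e^{−1} (with the empty sum equal to 0). -/
/-!
For `q ≤ s` the term `q (-1)^s / (s+1)!` lies between `0` and `(-1)^s s/(s+1)!`, and
`s/(s+1)! = 1/s! - 1/(s+1)!`. Summed over even `s` these maxima give `cosh 1 - sinh 1 = e⁻¹`,
over odd `s` they give `sinh 1 - (cosh 1 - 1) = 1 - e⁻¹`. So the sum over `F` is at most a finite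
sub-sum of the first series and at least minus one of the second; both inequalities are strict
because the series have positive terms beyond `max F`.
-/

open Finset Nat Real

theorem Finset.sum_lt_of_hasSum {ι α : Type*} [AddCommMonoid α] [PartialOrder α]
    [IsOrderedCancelAddMonoid α] [TopologicalSpace α] [OrderClosedTopology α]
    {f : ι → α} {a : α} (hf : HasSum f a) (hf₀ : ∀ i, 0 ≤ f i) {s : Finset ι} {j : ι}
    (hj : j ∉ s) (hfj : 0 < f j) : ∑ i ∈ s, f i < a := by
  classical
  calc ∑ i ∈ s, f i < ∑ i ∈ insert j s, f i :=
        sum_lt_sum_of_subset (subset_insert j s) (mem_insert_self j s) hj hfj fun i _ _ ↦ hf₀ i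
    _ ≤ a := sum_le_hasSum _ (fun i _ ↦ hf₀ i) hf

noncomputable def maxTerm (s : ℕ) : ℝ := s / (s + 1)!

lemma maxTerm_eq_sub (s : ℕ) : maxTerm s = (s ! : ℝ)⁻¹ - ((s + 1)! : ℝ)⁻¹ := by
  have : (s ! : ℝ) ≠ 0 := by positivity
  rw [maxTerm, factorial_succ]
  push_cast
  field_simp
  ring

lemma maxTerm_nonneg (s : ℕ) : 0 ≤ maxTerm s := by unfold maxTerm; positivity

lemma maxTerm_pos {s : ℕ} (hs : 0 < s) : 0 < maxTerm s := by unfold maxTerm; positivity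

noncomputable def evenMaxTerm (s : ℕ) : ℝ := if Even s then maxTerm s else 0

noncomputable def oddMaxTerm (s : ℕ) : ℝ := if Even s then 0 else maxTerm s

lemma evenMaxTerm_nonneg (s : ℕ) : 0 ≤ evenMaxTerm s := by
  unfold evenMaxTerm; split_ifs <;> simp [maxTerm_nonneg]

lemma oddMaxTerm_nonneg (s : ℕ) : 0 ≤ oddMaxTerm s := by
  unfold oddMaxTerm; split_ifs <;> simp [maxTerm_nonneg]

lemma hasSum_evenMaxTerm : HasSum evenMaxTerm (exp (-1)) := by
  have hcosh := hasSum_cosh 1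
  have hsinh := hasSum_sinh 1
  simp only [one_pow] at hcosh hsinh
  rw [← cosh_sub_sinh, ← add_zero (cosh 1 - sinh 1)]
  refine HasSum.even_add_odd ?_ ?_
  · exact (hcosh.sub hsinh).congr_fun fun k ↦ by simp [evenMaxTerm, maxTerm_eq_sub]
  · exact hasSum_zero.congr_fun fun k ↦ by simp [evenMaxTerm]

lemma hasSum_oddMaxTerm : HasSum oddMaxTerm (1 - exp (-1)) := by
  have hcosh := (hasSum_nat_add_iff' 1).mpr (hasSum_cosh 1)
  have hsinh := hasSum_sinh 1
  simp only [one_pow, sum_range_one, mul_zero, factorial_zero, cast_one, div_one] at hcosh hsinh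
  rw [show 1 - exp (-1) = 0 + (sinh 1 - (cosh 1 - 1)) by rw [← cosh_sub_sinh]; ring]
  refine HasSum.even_add_odd ?_ ?_
  · exact hasSum_zero.congr_fun fun k ↦ by simp [oddMaxTerm]
  · exact (hsinh.sub hcosh).congr_fun fun k ↦ by simp [oddMaxTerm, maxTerm_eq_sub, mul_add]

lemma term_le_evenMaxTerm {q s : ℕ} (hq : q ≤ s) :
    (q : ℝ) * (-1) ^ s / (s + 1)! ≤ evenMaxTerm s := by
  rcases s.even_or_odd with hs | hs
  · rw [evenMaxTerm, if_pos hs, maxTerm, hs.neg_one_pow, mul_one]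
    gcongr
  · rw [evenMaxTerm, if_neg (Nat.not_even_iff_odd.mpr hs), hs.neg_one_pow, mul_neg_one, neg_div,
      neg_nonpos]
    positivity

lemma neg_oddMaxTerm_le_term {q s : ℕ} (hq : q ≤ s) :
    -oddMaxTerm s ≤ (q : ℝ) * (-1) ^ s / (s + 1)! := by
  rcases s.even_or_odd with hs | hs
  · rw [oddMaxTerm, if_pos hs, hs.neg_one_pow, mul_one, neg_zero]
    positivity
  · rw [oddMaxTerm, if_neg (Nat.not_even_iff_odd.mpr hs), maxTerm, hs.neg_one_pow, mul_neg_one,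
      neg_div, neg_le_neg_iff]
    gcongr

theorem negative_part_bounds_general (F : Finset ℕ)
    (q : ℕ → ℕ) (hq : ∀ s ∈ F, 1 ≤ q s ∧ q s ≤ s) :
    Real.exp (-1) - 1 < ∑ s ∈ F, (q s : ℝ) * (-1) ^ s / (Nat.factorial (s + 1)) ∧
    ∑ s ∈ F, (q s : ℝ) * (-1) ^ s / (Nat.factorial (s + 1)) < Real.exp (-1) := by
  set M := F.sup id
  have h_not_mem : ∀ j, M < j → j ∉ F := fun j hj hjF ↦ (le_sup (f := id) hjF).not_gt hj
  have h_odd : ∑ s ∈ F, oddMaxTerm s < 1 - exp (-1) := by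
    refine sum_lt_of_hasSum hasSum_oddMaxTerm oddMaxTerm_nonneg
      (h_not_mem (2 * M + 1) (by omega)) ?_
    rw [oddMaxTerm, if_neg (by simp)]
    exact maxTerm_pos (by omega)
  have h_even : ∑ s ∈ F, evenMaxTerm s < exp (-1) := by
    refine sum_lt_of_hasSum hasSum_evenMaxTerm evenMaxTerm_nonneg
      (h_not_mem (2 * M + 2) (by omega)) ?_
    rw [evenMaxTerm, if_pos (by simp [Nat.even_add_one])]
    exact maxTerm_pos (by omega)
  constructor
  · calc exp (-1) - 1 < -∑ s ∈ F, oddMaxTerm s := by linarith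
      _ = ∑ s ∈ F, -oddMaxTerm s := by rw [sum_neg_distrib]
      _ ≤ _ := sum_le_sum fun s hs ↦ neg_oddMaxTerm_le_term (hq s hs).2
  · exact (sum_le_sum fun s hs ↦ term_le_evenMaxTerm (hq s hs).2).trans_lt h_even

/-- For every finite set `F` of positive integers and coefficients `q_s` with `1 ≤ q_s ≤ s`,
the sum `Σ_{s∈F} q_s·(-1)^s/((s+1)!)` lies strictly between `e⁻¹ − 1` and `e⁻¹`. -/
theorem negative_part_bounds (F : Finset ℕ) (hFpos : ∀ s ∈ F, 0 < s)
    (q : ℕ → ℕ) (hq : ∀ s ∈ F, 1 ≤ q s ∧ q s ≤ s) :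
    Real.exp (-1) - 1 < ∑ s ∈ F, (q s : ℝ) * (-1) ^ s / (Nat.factorial (s + 1)) ∧
    ∑ s ∈ F, (q s : ℝ) * (-1) ^ s / (Nat.factorial (s + 1)) < Real.exp (-1) :=
  negative_part_bounds_general F q hq
end

section
/- For every nonempty finite set F of positive integers and every choice of natural numbers (q_t)_{t∈F} with 1 ≤ q_t ≤ t for each t ∈ F, the integer Σ_{t∈F} q_t·(-1)^{t+1}·t! is nonzero. -/
lemma sum_mul_factorial_int (m : ℕ) :
    ∑ i ∈ Finset.range m, (i : ℤ) * (Nat.factorial i) = (Nat.factorial m : ℤ) - 1 := by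
  induction m with
  | zero => simp
  | succ n ih =>
      rw [Finset.sum_range_succ, ih, Nat.factorial_succ]
      push_cast
      ring

/-- For every nonempty finite set `F` of positive integers and coefficients `q_t` with
`1 ≤ q_t ≤ t`, the integer `Σ_{t∈F} q_t·(-1)^{t+1}·t!` is nonzero. -/
theorem positive_part_nonzero (F : Finset ℕ) (hF : F.Nonempty) (hFpos : ∀ t ∈ F, 0 < t)
    (q : ℕ → ℕ) (hq : ∀ t ∈ F, 1 ≤ q t ∧ q t ≤ t) :
    ∑ t ∈ F, (q t : ℤ) * (-1) ^ (t + 1) * (Nat.factorial t) ≠ 0 := by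
  set m := F.max' hF with hm
  have hmF : m ∈ F := F.max'_mem hF
  obtain ⟨hq1, hq2⟩ := hq m hmF
  -- split off the max term
  have hsplit : ∑ t ∈ F, (q t : ℤ) * (-1) ^ (t + 1) * (Nat.factorial t)
      = (q m : ℤ) * (-1) ^ (m + 1) * (Nat.factorial m)
        + ∑ t ∈ F.erase m, (q t : ℤ) * (-1) ^ (t + 1) * (Nat.factorial t) :=
    (Finset.add_sum_erase F _ hmF).symm
  set S := ∑ t ∈ F.erase m, (q t : ℤ) * (-1) ^ (t + 1) * (Nat.factorial t) with hS
  have hbound : |S| ≤ (Nat.factorial m : ℤ) - 1 := by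
    calc |S| ≤ ∑ t ∈ F.erase m, |(q t : ℤ) * (-1) ^ (t + 1) * (Nat.factorial t)| :=
          Finset.abs_sum_le_sum_abs _ _
      _ ≤ ∑ t ∈ F.erase m, (t : ℤ) * (Nat.factorial t) := by
          apply Finset.sum_le_sum
          intro t ht
          have htF := Finset.mem_of_mem_erase ht
          have := (hq t htF).2
          have habs : |(q t : ℤ) * (-1) ^ (t + 1) * (Nat.factorial t)|
              = (q t : ℤ) * (Nat.factorial t) := by
            rw [abs_mul, abs_mul, abs_pow, abs_neg, abs_one, one_pow, mul_one]
            rw [abs_of_nonneg (by positivity), abs_of_nonneg (by positivity)]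
          rw [habs]
          have : (q t : ℤ) ≤ (t : ℤ) := by exact_mod_cast this
          exact mul_le_mul_of_nonneg_right this (by positivity)
      _ ≤ ∑ t ∈ Finset.range m, (t : ℤ) * (Nat.factorial t) := by
          apply Finset.sum_le_sum_of_subset_of_nonneg
          · intro t ht
            rw [Finset.mem_range]
            have htF := Finset.mem_of_mem_erase ht
            have hne := Finset.ne_of_mem_erase ht
            exact lt_of_le_of_ne (F.le_max' t htF) hne
          · intro t _ _; positivity
      _ = (Nat.factorial m : ℤ) - 1 := sum_mul_factorial_int m
  have hbig : (Nat.factorial m : ℤ) ≤ |(q m : ℤ) * (-1) ^ (m + 1) * (Nat.factorial m)| := by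
    rw [abs_mul, abs_mul, abs_pow, abs_neg, abs_one, one_pow, mul_one,
      abs_of_nonneg (show (0:ℤ) ≤ (q m : ℤ) by positivity),
      abs_of_nonneg (show (0:ℤ) ≤ ((Nat.factorial m : ℕ) : ℤ) by positivity)]
    have : (1 : ℤ) ≤ (q m : ℤ) := by exact_mod_cast hq1
    nlinarith [Nat.factorial_pos m, (show (0:ℤ) < (Nat.factorial m : ℤ) by exact_mod_cast Nat.factorial_pos m)]
  intro hzero
  rw [hsplit] at hzero
  have : (q m : ℤ) * (-1) ^ (m + 1) * (Nat.factorial m) = -S := by linarith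
  rw [this, abs_neg] at hbig
  have hpos : (0:ℤ) < (Nat.factorial m : ℤ) := by exact_mod_cast Nat.factorial_pos m
  linarith
end

section
/- (Hindman–Strauss) Let (S, +) be an infinite countable left cancellative semigroup, let ℱ = (F_n)_{n∈ℕ} be a left Følner sequence in S, and let A ⊆ S. Then there is a countably additive measure μ on the Borel σ-algebra of the Stone–Čech compactification βS (the space of ultrafilters on S with its standard compact Hausdorff topology) such that: (1) μ(cl A) = d̄_ℱ(A); (2) for all B ⊆ S, μ(cl B) ≤ d̄_ℱ(B); (3) for every Borel set B ⊆ βS and every t ∈ S, μ(−t + B) = μ(B) = μ(t + B), where t + B is the image of B under left translation ν ↦ e(t) + ν by the principal ultrafilter e(t) in the semigroup (βS, +), and −t + B is its preimage; and (4) μ(βS) = 1. -/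
/-!
Along an ultrafilter `p ≤ atTop` on `ℕ` for which the densities `|A ∩ F n| / |F n|` tend to
`d̄(A)`, the `p`-limits `m B` of the densities of all `B ⊆ S` form a finitely additive
probability on `S` with `m A = d̄(A)` and `m ≤ d̄`; the Følner property makes `m` invariant under
`B ↦ -t + B`. The function `K ↦ inf {m B | K ⊆ cl B}` is a regular content on the compact
zero-dimensional space `βS`, so its measure `μ` satisfies `μ (cl B) = m B` and equals that infimum
on closed sets. Left translation by `pure t` is `Ultrafilter.map (t + ·)`, which pulls `cl B` back to
`cl (-t + B)`; by invariance of `m`, `μ` and its pushforward agree on the π-system of closed sets,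
hence everywhere. Left cancellativity makes the translation a closed embedding, which gives the
statement about images.
-/

open scoped symmDiff

attribute [local instance] Ultrafilter.add Ultrafilter.addSemigroup

/-- `(F_n)` is a left Følner sequence in the additive semigroup `S`. -/
def IsLeftFolner {S : Type*} [AddSemigroup S] [DecidableEq S] (F : ℕ → Finset S) : Prop :=
  (∀ n, (F n).Nonempty) ∧
    ∀ s : S, Filter.Tendsto
      (fun n => ((((F n).image (s + ·)) ∆ (F n)).card : ℝ) / (F n).card)
      Filter.atTop (nhds 0)

/-- The upper density of `A ⊆ S` along the sequence of finite sets `(F_n)`: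
`d̄_ℱ(A) = limsup_n |A ∩ F_n| / |F_n|`. -/
noncomputable def upperDensity {S : Type*} (F : ℕ → Finset S) (A : Set S) : ℝ :=
  Filter.limsup (fun n => (Set.ncard (A ∩ ↑(F n)) : ℝ) / (F n).card) Filter.atTop

open scoped ENNReal NNReal Topology
open Filter Set MeasureTheory TopologicalSpace Function

namespace HindmanStrauss

section Topology

variable {α β : Type*}

def cl (B : Set α) : Set (Ultrafilter α) := {u | B ∈ u}

@[simp] theorem mem_cl {B : Set α} {u : Ultrafilter α} : u ∈ cl B ↔ B ∈ u := Iff.rfl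

@[simp] theorem cl_univ : cl (univ : Set α) = univ :=
  eq_univ_of_forall fun _ => univ_mem

theorem cl_inter (B C : Set α) : cl (B ∩ C) = cl B ∩ cl C :=
  ext fun _ => inter_mem_iff

theorem cl_union (B C : Set α) : cl (B ∪ C) = cl B ∪ cl C :=
  ext fun _ => Ultrafilter.union_mem_iff

theorem cl_compl (B : Set α) : cl Bᶜ = (cl B)ᶜ :=
  ext fun _ => Ultrafilter.compl_mem_iff_notMem

theorem cl_subset_cl_iff {B C : Set α} : cl B ⊆ cl C ↔ B ⊆ C :=
  ⟨fun h x hx => by simpa using h (show pure x ∈ cl B by simpa using hx),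
    fun h _ hu => mem_of_superset hu h⟩

theorem isClopen_cl (B : Set α) : IsClopen (cl B) :=
  ⟨ultrafilter_isClosed_basic B, ultrafilter_isOpen_basic B⟩

theorem preimage_pure_mem {U : Set (Ultrafilter α)} {u : Ultrafilter α} (hU : U ∈ 𝓝 u) :
    pure ⁻¹' U ∈ u :=
  u.tendsto_pure_self hU

theorem eq_cl_of_isClopen {W : Set (Ultrafilter α)} (hW : IsClopen W) :
    W = cl (pure ⁻¹' W) := by
  ext u
  refine ⟨fun hu => preimage_pure_mem (hW.isOpen.mem_nhds hu), fun hu => ?_⟩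
  by_contra hu'
  exact Ultrafilter.compl_notMem_iff.2 hu
    (preimage_pure_mem (hW.isClosed.isOpen_compl.mem_nhds hu'))

theorem exists_cl_between {K U : Set (Ultrafilter α)} (hK : IsClosed K) (hU : IsOpen U)
    (hKU : K ⊆ U) : ∃ B : Set α, K ⊆ cl B ∧ cl B ⊆ U := by
  obtain ⟨W, hW, hKW, hWU⟩ := exists_clopen_of_closed_subset_open hK hU hKU
  exact ⟨pure ⁻¹' W, eq_cl_of_isClopen hW ▸ hKW, eq_cl_of_isClopen hW ▸ hWU⟩

theorem preimage_map_cl (f : α → β) (B : Set β) :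
    Ultrafilter.map f ⁻¹' cl B = cl (f ⁻¹' B) := rfl

theorem continuous_ultrafilter_map (f : α → β) : Continuous (Ultrafilter.map f) :=
  ultrafilterBasis_is_basis.continuous_iff.2 <| forall_mem_range.2 fun B =>
    ultrafilter_isOpen_basic (f ⁻¹' B)

theorem ultrafilter_map_injective {f : α → β} (hf : Injective f) :
    Injective (Ultrafilter.map f : Ultrafilter α → Ultrafilter β) := by
  intro u v huv
  ext s
  simpa [Ultrafilter.mem_map, preimage_image_eq s hf] using
    congrArg (f '' s ∈ ·) huv

theorem exists_map_eq_of_range_mem {f : α → β} (hf : Injective f) {u : Ultrafilter β}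
    (h : range f ∈ u) : ∃ v : Ultrafilter α, v.map f = u := by
  refine ⟨u.comap hf h, Ultrafilter.coe_injective (Filter.ext fun s => ?_)⟩
  rw [Ultrafilter.coe_map, Filter.mem_map, Ultrafilter.mem_coe, Ultrafilter.mem_comap,
    image_preimage_eq_inter_range, Ultrafilter.mem_coe]
  exact ⟨fun hs => mem_of_superset hs inter_subset_left, fun hs => inter_mem hs h⟩

theorem pure_add_eq_map [Add α] (t : α) (ν : Ultrafilter α) :
    (pure t : Ultrafilter α) + ν = ν.map (t + ·) :=
  Ultrafilter.coe_injective (Filter.ext fun _ => Iff.rfl)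

instance Ultrafilter.measurableSpace : MeasurableSpace (Ultrafilter α) := borel _

instance Ultrafilter.borelSpace : BorelSpace (Ultrafilter α) := ⟨rfl⟩

end Topology

structure FinitelyAdditiveMeasure (α : Type*) where
  toFun : Set α → ℝ≥0
  mono' : Monotone toFun
  union_of_disjoint' : ∀ B C, Disjoint B C → toFun (B ∪ C) = toFun B + toFun C

namespace FinitelyAdditiveMeasure

variable {α : Type*} (m : FinitelyAdditiveMeasure α)

instance : CoeFun (FinitelyAdditiveMeasure α) (fun _ => Set α → ℝ≥0) := ⟨toFun⟩

theorem mono {B C : Set α} (h : B ⊆ C) : m B ≤ m C := m.mono' h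

theorem union_of_disjoint {B C : Set α} (h : Disjoint B C) : m (B ∪ C) = m B + m C :=
  m.union_of_disjoint' B C h

@[simp] theorem empty : m ∅ = 0 := by
  simpa using m.union_of_disjoint (disjoint_empty (∅ : Set α))

theorem union_le (B C : Set α) : m (B ∪ C) ≤ m B + m C := by
  rw [← union_sdiff_self, m.union_of_disjoint disjoint_sdiff_right]
  exact add_le_add_right (m.mono sdiff_subset) _

noncomputable def coverInf (K : Set (Ultrafilter α)) : ℝ≥0∞ :=
  ⨅ (B : Set α) (_ : K ⊆ cl B), (m B : ℝ≥0∞)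

theorem coverInf_le {K : Set (Ultrafilter α)} {B : Set α} (h : K ⊆ cl B) :
    m.coverInf K ≤ m B :=
  iInf₂_le B h

theorem coverInf_mono {K K' : Set (Ultrafilter α)} (h : K ⊆ K') :
    m.coverInf K ≤ m.coverInf K' :=
  le_iInf₂ fun _ hB => m.coverInf_le (h.trans hB)

theorem coverInf_ne_top (K : Set (Ultrafilter α)) : m.coverInf K ≠ ∞ :=
  ne_top_of_le_ne_top ENNReal.coe_ne_top (m.coverInf_le (cl_univ ▸ subset_univ K))

theorem coverInf_cl (B : Set α) : m.coverInf (cl B) = m B :=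
  le_antisymm (m.coverInf_le subset_rfl) <| le_iInf₂ fun _ hC =>
    ENNReal.coe_le_coe.2 (m.mono (cl_subset_cl_iff.1 hC))

theorem coverInf_union_le (K₁ K₂ : Set (Ultrafilter α)) :
    m.coverInf (K₁ ∪ K₂) ≤ m.coverInf K₁ + m.coverInf K₂ := by
  refine ENNReal.le_iInf₂_add_iInf₂ fun B₁ h₁ B₂ h₂ => ?_
  calc m.coverInf (K₁ ∪ K₂) ≤ m (B₁ ∪ B₂) :=
        m.coverInf_le (cl_union B₁ B₂ ▸ union_subset_union h₁ h₂)
    _ ≤ m B₁ + m B₂ := mod_cast m.union_le B₁ B₂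

theorem coverInf_union_of_disjoint {K₁ K₂ : Set (Ultrafilter α)} (h₁ : IsClosed K₁)
    (h₂ : IsClosed K₂) (hdis : Disjoint K₁ K₂) :
    m.coverInf (K₁ ∪ K₂) = m.coverInf K₁ + m.coverInf K₂ := by
  refine le_antisymm (m.coverInf_union_le K₁ K₂) (le_iInf₂ fun D hD => ?_)
  obtain ⟨B, hK₁B, hBK₂⟩ := exists_cl_between h₁ h₂.isOpen_compl hdis.subset_compl_right
  have hD₁ : K₁ ⊆ cl (D ∩ B) := cl_inter D B ▸ subset_inter (subset_union_left.trans hD) hK₁B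
  have hD₂ : K₂ ⊆ cl (D ∩ Bᶜ) := by
    rw [cl_inter, cl_compl]
    exact subset_inter (subset_union_right.trans hD) (subset_compl_comm.1 hBK₂)
  calc m.coverInf K₁ + m.coverInf K₂ ≤ m (D ∩ B) + m (D ∩ Bᶜ) :=
        add_le_add (m.coverInf_le hD₁) (m.coverInf_le hD₂)
    _ = m D := by
        rw [← ENNReal.coe_add, ← m.union_of_disjoint
          (disjoint_compl_right.mono inter_subset_right inter_subset_right), inter_union_compl]

noncomputable def toContent : Content (Ultrafilter α) where
  toFun K := (m.coverInf K).toNNReal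
  mono' _ K₂ h := ENNReal.toNNReal_mono (m.coverInf_ne_top K₂) (m.coverInf_mono h)
  sup_disjoint' K₁ K₂ hdis h₁ h₂ := by
    rw [Compacts.coe_sup, m.coverInf_union_of_disjoint h₁ h₂ hdis,
      ENNReal.toNNReal_add (m.coverInf_ne_top _) (m.coverInf_ne_top _)]
  sup_le' K₁ K₂ := by
    rw [Compacts.coe_sup, ← ENNReal.toNNReal_add (m.coverInf_ne_top _) (m.coverInf_ne_top _)]
    exact ENNReal.toNNReal_mono (by simp [m.coverInf_ne_top]) (m.coverInf_union_le K₁ K₂)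

theorem toContent_apply (K : Compacts (Ultrafilter α)) : m.toContent K = m.coverInf K :=
  ENNReal.coe_toNNReal (m.coverInf_ne_top K)

theorem toContent_cl (B : Set α) :
    m.toContent ⟨cl B, (isClopen_cl B).isClosed.isCompact⟩ = m B := by
  rw [toContent_apply, Compacts.coe_mk, coverInf_cl]

theorem contentRegular : m.toContent.ContentRegular := by
  intro K
  rw [toContent_apply]
  refine le_antisymm (le_iInf₂ fun K' hK' => ?_) (le_iInf₂ fun B hB => ?_)
  · obtain ⟨B, hKB, hBK'⟩ := exists_cl_between K.isCompact.isClosed isOpen_interior hK'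
    calc m.coverInf K ≤ m B := m.coverInf_le hKB
      _ = m.toContent ⟨cl B, (isClopen_cl B).isClosed.isCompact⟩ := (m.toContent_cl B).symm
      _ ≤ m.toContent K' := m.toContent.mono _ _ (hBK'.trans interior_subset)
  · have hB' : (K : Set (Ultrafilter α)) ⊆ interior (cl B) := by
      rwa [(isClopen_cl B).isOpen.interior_eq]
    exact (iInf₂_le (⟨cl B, (isClopen_cl B).isClosed.isCompact⟩ : Compacts _) hB').trans_eq
      (m.toContent_cl B)

noncomputable def measure : Measure (Ultrafilter α) := m.toContent.measure

theorem measure_of_isClosed {K : Set (Ultrafilter α)} (hK : IsClosed K) :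
    m.measure K = m.coverInf K := by
  have := m.toContent.measure_eq_content_of_regular m.contentRegular ⟨K, hK.isCompact⟩
  rwa [toContent_apply] at this

theorem measure_cl (B : Set α) : m.measure (cl B) = m B := by
  rw [m.measure_of_isClosed (isClopen_cl B).isClosed, coverInf_cl]

instance : IsFiniteMeasure m.measure :=
  ⟨by simp [← cl_univ, measure_cl]⟩

section Invariance

variable {f : α → α}

theorem apply_image_of_invariant (hm : ∀ B, m (f ⁻¹' B) = m B) (hf : Injective f) (B : Set α) :
    m (f '' B) = m B := by
  rw [← hm, preimage_image_eq B hf]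

theorem apply_compl_range_of_invariant (hm : ∀ B, m (f ⁻¹' B) = m B) : m (range f)ᶜ = 0 := by
  rw [← hm, preimage_compl, preimage_range, compl_univ, empty]

theorem coverInf_preimage_map (hm : ∀ B, m (f ⁻¹' B) = m B) (hf : Injective f)
    (K : Set (Ultrafilter α)) :
    m.coverInf (Ultrafilter.map f ⁻¹' K) = m.coverInf K := by
  refine le_antisymm (le_iInf₂ fun B hB => ?_) (le_iInf₂ fun B hB => ?_)
  · calc m.coverInf (Ultrafilter.map f ⁻¹' K) ≤ m (f ⁻¹' B) :=
          m.coverInf_le (preimage_map_cl f B ▸ preimage_mono hB)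
      _ = m B := by rw [hm]
  · -- `(range f)ᶜ` is `m`-null, and over `range f` every ultrafilter is an image under `map f`
    have hcover : K ⊆ cl (f '' B ∪ (range f)ᶜ) := by
      intro u hu
      by_cases hrange : range f ∈ u
      · obtain ⟨v, rfl⟩ := exists_map_eq_of_range_mem hf hrange
        have hfB : f '' B ∈ v.map f :=
          Ultrafilter.mem_map.2 (mem_of_superset (mem_cl.1 (hB hu)) (subset_preimage_image f B))
        exact mem_of_superset hfB subset_union_left
      · exact mem_of_superset (Ultrafilter.compl_mem_iff_notMem.2 hrange) subset_union_right
    calc m.coverInf K ≤ m (f '' B ∪ (range f)ᶜ) := m.coverInf_le hcover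
      _ = m B := by
          rw [m.union_of_disjoint (disjoint_compl_right_iff_subset.2 (image_subset_range f B)),
            m.apply_image_of_invariant hm hf, m.apply_compl_range_of_invariant hm, add_zero]

theorem measurePreserving_map (hm : ∀ B, m (f ⁻¹' B) = m B) (hf : Injective f) :
    MeasurePreserving (Ultrafilter.map f) m.measure m.measure := by
  have hcont := continuous_ultrafilter_map f
  refine ⟨hcont.measurable, ext_of_generate_finite _ borel_eq_generateFrom_isClosed
    isPiSystem_isClosed (fun K hK => ?_) ?_⟩
  · rw [Measure.map_apply hcont.measurable hK.measurableSet, m.measure_of_isClosed hK,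
      m.measure_of_isClosed (hK.preimage hcont), m.coverInf_preimage_map hm hf]
  · rw [Measure.map_apply hcont.measurable MeasurableSet.univ, preimage_univ]

theorem measure_image_map (hm : ∀ B, m (f ⁻¹' B) = m B) (hf : Injective f)
    {X : Set (Ultrafilter α)} (hX : MeasurableSet X) :
    m.measure (Ultrafilter.map f '' X) = m.measure X := by
  have hemb := ((continuous_ultrafilter_map f).isClosedEmbedding
    (ultrafilter_map_injective hf)).measurableEmbedding
  rw [← (m.measurePreserving_map hm hf).measure_preimage
    (hemb.measurableSet_image.2 hX).nullMeasurableSet,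
    preimage_image_eq X (ultrafilter_map_injective hf)]

end Invariance

end FinitelyAdditiveMeasure

section Density

variable {S : Type*} (F : ℕ → Finset S)

noncomputable def densityAt (B : Set S) (n : ℕ) : ℝ :=
  ((B ∩ ↑(F n)).ncard : ℝ) / (F n).card

theorem ncard_inter_le_card (B : Set S) (G : Finset S) : (B ∩ ↑G).ncard ≤ G.card :=
  (ncard_le_ncard inter_subset_right G.finite_toSet).trans_eq (ncard_coe_finset G)

theorem densityAt_mem_Icc (B : Set S) (n : ℕ) : densityAt F B n ∈ Icc 0 1 :=
  ⟨by unfold densityAt; positivity, div_le_one_of_le₀ (mod_cast ncard_inter_le_card B (F n))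
    (Nat.cast_nonneg _)⟩

theorem densityAt_mono {B C : Set S} (h : B ⊆ C) (n : ℕ) :
    densityAt F B n ≤ densityAt F C n :=
  div_le_div_of_nonneg_right (mod_cast ncard_le_ncard (inter_subset_inter_left _ h)
    ((F n).finite_toSet.subset inter_subset_right)) (Nat.cast_nonneg _)

theorem densityAt_union_of_disjoint {B C : Set S} (h : Disjoint B C) (n : ℕ) :
    densityAt F (B ∪ C) n = densityAt F B n + densityAt F C n := by
  rw [densityAt, densityAt, densityAt, ← add_div, union_inter_distrib_right,
    ncard_union_eq (h.mono inter_subset_left inter_subset_left)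
      ((F n).finite_toSet.subset inter_subset_right)
      ((F n).finite_toSet.subset inter_subset_right),
    Nat.cast_add]

theorem densityAt_univ {n : ℕ} (h : (F n).Nonempty) : densityAt F univ n = 1 := by
  rw [densityAt, univ_inter, ncard_coe_finset, div_self (mod_cast h.card_pos.ne')]

theorem ncard_inter_le_add_card_symmDiff [DecidableEq S] (B : Set S) (G H : Finset S) :
    (B ∩ ↑G).ncard ≤ (B ∩ ↑H).ncard + (G ∆ H).card := by
  have hsub : (B ∩ ↑G) \ (B ∩ ↑H) ⊆ ↑(G ∆ H) := fun _ ⟨⟨hB, hG⟩, hH⟩ =>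
    Finset.mem_symmDiff.2 (Or.inl ⟨hG, fun h => hH ⟨hB, h⟩⟩)
  calc (B ∩ ↑G).ncard ≤ ((B ∩ ↑G) \ (B ∩ ↑H)).ncard + (B ∩ ↑H).ncard :=
        ncard_le_ncard_sdiff_add_ncard _ _ (H.finite_toSet.subset inter_subset_right)
    _ ≤ (G ∆ H).card + (B ∩ ↑H).ncard := by
        grw [ncard_le_ncard hsub (Finset.finite_toSet _), ncard_coe_finset]
    _ = (B ∩ ↑H).ncard + (G ∆ H).card := add_comm _ _

theorem abs_densityAt_preimage_sub_le [DecidableEq S] {f : S → S} (hf : Injective f)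
    (B : Set S) (n : ℕ) :
    |densityAt F (f ⁻¹' B) n - densityAt F B n| ≤
      (((F n).image f ∆ F n).card : ℝ) / (F n).card := by
  have himage : (f ⁻¹' B ∩ ↑(F n)).ncard = (B ∩ ↑((F n).image f)).ncard := by
    rw [← ncard_image_of_injective _ hf, image_preimage_inter, Finset.coe_image]
  have h₁ := ncard_inter_le_add_card_symmDiff B ((F n).image f) (F n)
  have h₂ := ncard_inter_le_add_card_symmDiff B (F n) ((F n).image f)
  rw [symmDiff_comm] at h₂
  rw [densityAt, densityAt, himage, ← sub_div, abs_div, Nat.abs_cast]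
  refine div_le_div_of_nonneg_right (abs_sub_le_iff.2 ⟨?_, ?_⟩) (Nat.cast_nonneg _)
  · rw [sub_le_iff_le_add']; exact_mod_cast h₁
  · rw [sub_le_iff_le_add']; exact_mod_cast h₂

variable (p : Ultrafilter ℕ)

noncomputable def ultraDensity (B : Set S) : ℝ := limUnder (p : Filter ℕ) (densityAt F B)

theorem tendsto_ultraDensity (B : Set S) :
    Tendsto (densityAt F B) p (𝓝 (ultraDensity F p B)) := by
  obtain ⟨x, -, hx⟩ := isCompact_Icc.ultrafilter_le_nhds (p.map (densityAt F B))
    (le_principal_iff.2 (Ultrafilter.mem_map.2 (univ_mem' (densityAt_mem_Icc F B))))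
  exact tendsto_nhds_limUnder ⟨x, hx⟩

theorem ultraDensity_nonneg (B : Set S) : 0 ≤ ultraDensity F p B :=
  ge_of_tendsto' (tendsto_ultraDensity F p B) fun n => (densityAt_mem_Icc F B n).1

theorem ultraDensity_mono {B C : Set S} (h : B ⊆ C) :
    ultraDensity F p B ≤ ultraDensity F p C :=
  le_of_tendsto_of_tendsto' (tendsto_ultraDensity F p B) (tendsto_ultraDensity F p C)
    (densityAt_mono F h)

theorem ultraDensity_union_of_disjoint {B C : Set S} (h : Disjoint B C) :
    ultraDensity F p (B ∪ C) = ultraDensity F p B + ultraDensity F p C := by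
  refine tendsto_nhds_unique (tendsto_ultraDensity F p _) ?_
  rw [funext (densityAt_union_of_disjoint F h)]
  exact (tendsto_ultraDensity F p B).add (tendsto_ultraDensity F p C)

theorem ultraDensity_univ (hF : ∀ n, (F n).Nonempty) : ultraDensity F p univ = 1 :=
  tendsto_nhds_unique (tendsto_ultraDensity F p univ)
    (tendsto_const_nhds.congr fun n => (densityAt_univ F (hF n)).symm)

theorem ultraDensity_preimage [DecidableEq S] (hp : (p : Filter ℕ) ≤ atTop) {f : S → S}
    (hf : Injective f)
    (hF : Tendsto (fun n => (((F n).image f ∆ F n).card : ℝ) / (F n).card) atTop (𝓝 0))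
    (B : Set S) : ultraDensity F p (f ⁻¹' B) = ultraDensity F p B := by
  have hdiff : Tendsto (fun n => densityAt F (f ⁻¹' B) n - densityAt F B n) atTop (𝓝 0) :=
    squeeze_zero_norm (abs_densityAt_preimage_sub_le F hf B) hF
  exact sub_eq_zero.1 (tendsto_nhds_unique
    ((tendsto_ultraDensity F p _).sub (tendsto_ultraDensity F p B)) (hdiff.mono_left hp))

theorem isBoundedUnder_densityAt (B : Set S) :
    IsBoundedUnder (· ≤ ·) atTop (densityAt F B) :=
  isBoundedUnder_of ⟨1, fun n => (densityAt_mem_Icc F B n).2⟩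

theorem ultraDensity_le_upperDensity (hp : (p : Filter ℕ) ≤ atTop) (B : Set S) :
    ultraDensity F p B ≤ upperDensity F B :=
  (mapClusterPt_iff_ultrafilter.2 ⟨p, hp, tendsto_ultraDensity F p B⟩).le_limsup
    (isBoundedUnder_densityAt F B)

theorem exists_ultraDensity_eq_upperDensity (A : Set S) :
    ∃ p : Ultrafilter ℕ, (p : Filter ℕ) ≤ atTop ∧ ultraDensity F p A = upperDensity F A := by
  have hcobdd : IsCoboundedUnder (· ≤ ·) atTop (densityAt F A) :=
    (isBoundedUnder_of ⟨0, fun n => (densityAt_mem_Icc F A n).1⟩).isCoboundedUnder_le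
  obtain ⟨p, hp, hpA⟩ := mapClusterPt_iff_ultrafilter.1
    (MapClusterPt.limsup hcobdd (isBoundedUnder_densityAt F A))
  exact ⟨p, hp, tendsto_nhds_unique (tendsto_ultraDensity F p A) hpA⟩

noncomputable def ultraDensityMeasure : FinitelyAdditiveMeasure S where
  toFun B := (ultraDensity F p B).toNNReal
  mono' _ _ h := Real.toNNReal_le_toNNReal (ultraDensity_mono F p h)
  union_of_disjoint' _ _ h := by
    rw [ultraDensity_union_of_disjoint F p h,
      Real.toNNReal_add (ultraDensity_nonneg F p _) (ultraDensity_nonneg F p _)]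

theorem ultraDensityMeasure_apply (B : Set S) :
    (ultraDensityMeasure F p B : ℝ≥0∞) = ENNReal.ofReal (ultraDensity F p B) := rfl

end Density

end HindmanStrauss

open HindmanStrauss in
theorem hindman_strauss_general (S : Type*) [AddSemigroup S]
    [DecidableEq S] (hlc : ∀ a b c : S, a + b = a + c → b = c)
    (F : ℕ → Finset S) (hF : IsLeftFolner F) (A : Set S) :
    ∃ μ : @MeasureTheory.Measure (Ultrafilter S) (borel (Ultrafilter S)),
      μ {u : Ultrafilter S | A ∈ u} = ENNReal.ofReal (upperDensity F A) ∧
      (∀ B : Set S, μ {u : Ultrafilter S | B ∈ u} ≤ ENNReal.ofReal (upperDensity F B)) ∧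
      (∀ B : Set (Ultrafilter S), @MeasurableSet (Ultrafilter S) (borel (Ultrafilter S)) B → ∀ t : S,
        μ ((fun ν : Ultrafilter S => (pure t : Ultrafilter S) + ν) ⁻¹' B) = μ B ∧
        μ B = μ ((fun ν : Ultrafilter S => (pure t : Ultrafilter S) + ν) '' B)) ∧
      μ Set.univ = 1 := by
  obtain ⟨p, hp, hpA⟩ := exists_ultraDensity_eq_upperDensity F A
  set m := ultraDensityMeasure F p
  refine ⟨m.measure, ?_, fun B => ?_, fun B hB t => ?_, ?_⟩
  · rw [← hpA, ← ultraDensityMeasure_apply]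
    exact m.measure_cl A
  · rw [← cl, m.measure_cl, ultraDensityMeasure_apply]
    exact ENNReal.ofReal_le_ofReal (ultraDensity_le_upperDensity F p hp B)
  · have hinj : Injective (t + ·) := fun x y => hlc t x y
    have hm (B : Set S) : m ((t + ·) ⁻¹' B) = m B :=
      congrArg Real.toNNReal (ultraDensity_preimage F p hp hinj (hF.2 t) B)
    simp only [pure_add_eq_map]
    exact ⟨(m.measurePreserving_map hm hinj).measure_preimage hB.nullMeasurableSet,
      (m.measure_image_map hm hinj hB).symm⟩
  · rw [← cl_univ, m.measure_cl, ultraDensityMeasure_apply, ultraDensity_univ F p hF.1,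
      ENNReal.ofReal_one]

/-- Hindman–Strauss: for an infinite countable left cancellative additive semigroup `S`,
a left Følner sequence `ℱ` and `A ⊆ S`, there is a countably additive measure `μ` on the
Borel σ-algebra of the space `βS` of ultrafilters on `S` such that (1) `μ(cl A) = d̄_ℱ(A)`,
(2) `μ(cl B) ≤ d̄_ℱ(B)` for all `B ⊆ S`, (3) `μ` is invariant under left translation by
principal ultrafilters, both for preimages and images of Borel sets, and (4) `μ(βS) = 1`. -/
theorem hindman_strauss (S : Type*) [AddSemigroup S] [Countable S] [Infinite S]
    [DecidableEq S] (hlc : ∀ a b c : S, a + b = a + c → b = c)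
    (F : ℕ → Finset S) (hF : IsLeftFolner F) (A : Set S) :
    ∃ μ : @MeasureTheory.Measure (Ultrafilter S) (borel (Ultrafilter S)),
      μ {u : Ultrafilter S | A ∈ u} = ENNReal.ofReal (upperDensity F A) ∧
      (∀ B : Set S, μ {u : Ultrafilter S | B ∈ u} ≤ ENNReal.ofReal (upperDensity F B)) ∧
      (∀ B : Set (Ultrafilter S), @MeasurableSet (Ultrafilter S) (borel (Ultrafilter S)) B → ∀ t : S,
        μ ((fun ν : Ultrafilter S => (pure t : Ultrafilter S) + ν) ⁻¹' B) = μ B ∧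
        μ B = μ ((fun ν : Ultrafilter S => (pure t : Ultrafilter S) + ν) '' B)) ∧
      μ Set.univ = 1 :=
  hindman_strauss_general S hlc F hF A
end
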